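/- Let C ⊆ 2^[n] be an inductively pierced code whose graph G(C) contains a clique of size k+1. Then C has no well-formed realization by open balls in R^{k−1}. -/

import Mathlib

open MvPolynomial

noncomputable section

abbrev PM (n : ℕ) := MvPolynomial (Fin n) (ZMod 2)

/-- A pseudo-monomial in `F₂[x₁,…,xₙ]`. -/
def IsPseudoMonomial {n : ℕ} (f : PM n) : Prop :=
  ∃ σ τ : Finset (Fin n), Disjoint σ τ ∧
    f = (∏ i ∈ σ, X i) * ∏ j ∈ τ, (1 - X j)

/-- The indicator pseudo-monomial `ρ_σ`. -/
def rho {n : ℕ} (σ : Finset (Fin n)) : PM n :=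
  (∏ i ∈ σ, X i) * ∏ j ∈ σᶜ, (1 - X j)

/-- The neural ideal of a code. -/
def neuralIdeal {n : ℕ} (C : Set (Finset (Fin n))) : Ideal (PM n) :=
  Ideal.span {f | ∃ σ ∉ C, f = rho σ}

/-- The canonical form: minimal (under divisibility) pseudo-monomials in the neural ideal. -/
def CF {n : ℕ} (C : Set (Finset (Fin n))) : Set (PM n) :=
  {f | IsPseudoMonomial f ∧ f ∈ neuralIdeal C ∧
    ∀ g, IsPseudoMonomial g → g ∈ neuralIdeal C → g ∣ f → g = f}

/-- Evaluation of a polynomial at a codeword. -/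
def evalAt {n : ℕ} (c : Finset (Fin n)) (f : PM n) : ZMod 2 :=
  MvPolynomial.eval (fun i => if i ∈ c then 1 else 0) f

/-- The standing conventions on codes. -/
def GoodCode {n : ℕ} (C : Set (Finset (Fin n))) : Prop :=
  ∅ ∈ C ∧ (∀ i : Fin n, ∃ c ∈ C, i ∈ c) ∧
    ∀ i j : Fin n, i ≠ j → ¬(∀ c ∈ C, i ∈ c ↔ j ∈ c)

/-- The interval `[σ,τ]`. -/
def Icc' {n : ℕ} (σ τ : Finset (Fin n)) : Set (Finset (Fin n)) :=
  {γ | σ ⊆ γ ∧ γ ⊆ τ}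

/-- The deletion of a neuron from a code (keeping the ambient index set). -/
def del {n : ℕ} (C : Set (Finset (Fin n))) (i : Fin n) : Set (Finset (Fin n)) :=
  (fun c => c.erase i) '' C

/-- The deletion of the last neuron, as a code on `Fin n`. -/
def delLast {n : ℕ} (C : Set (Finset (Fin (n + 1)))) : Set (Finset (Fin n)) :=
  {d | ∃ c ∈ C, d.map Fin.castSuccEmb = c.erase (Fin.last n)}

/-- Neuron `i` is a `k`-piercing of `C`. -/
def IsPiercing {n : ℕ} (C : Set (Finset (Fin n))) (i : Fin n) (k : ℕ) : Prop :=
  ∃ σ τ : Finset (Fin n), σ ⊆ τ ∧ i ∉ τ ∧ (τ \ σ).card = k ∧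
    Icc' σ τ ⊆ del C i ∧
    C = del C i ∪ Icc' (insert i σ) (insert i τ)

/-- `C` is `k`-inductively pierced. -/
inductive InductivelyPierced {n : ℕ} (k : ℕ) : Set (Finset (Fin n)) → Prop
  | empty : InductivelyPierced k {∅}
  | pierce (C : Set (Finset (Fin n))) (i : Fin n) (k' : ℕ) (hk : k' ≤ k)
      (hp : IsPiercing C i k') (hrec : InductivelyPierced k (del C i)) :
      InductivelyPierced k C

/-- All elements of the canonical form have degree exactly two. -/
def DegreeTwo {n : ℕ} (C : Set (Finset (Fin n))) : Prop :=
  ∀ f ∈ CF C, f.totalDegree = 2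

/-- The general relationship graph `G(C)` of a degree two code. -/
def GRel {n : ℕ} (C : Set (Finset (Fin n))) : SimpleGraph (Fin n) where
  Adj i j := i ≠ j ∧ ∀ f ∈ CF C, f.vars ≠ {i, j}
  symm := ⟨by
    rintro i j ⟨hne, h⟩
    exact ⟨hne.symm, fun f hf => by rw [Finset.pair_comm]; exact h f hf⟩⟩
  loopless := ⟨fun i h => h.1 rfl⟩

/-- The order relation of `P(C)`: `i < j` iff `xᵢ(1-xⱼ) ∈ CF(J_C)`. -/
def PLt {n : ℕ} (C : Set (Finset (Fin n))) (i j : Fin n) : Prop :=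
  X i * (1 - X j) ∈ CF C

/-- A simplicial vertex: its neighborhood is a clique. -/
def IsSimplicial {V : Type*} (G : SimpleGraph V) (v : V) : Prop :=
  G.IsClique (G.neighborSet v)

/-- A chordal graph: every cycle of length at least four has a chord. -/
def IsChordal {V : Type*} (G : SimpleGraph V) : Prop :=
  ∀ (u : V) (w : G.Walk u u), w.IsCycle → 4 ≤ w.length →
    ∃ a b, G.Adj a b ∧ a ∈ w.support ∧ b ∈ w.support ∧ s(a, b) ∉ w.edges

/-- The code of a collection of sets. -/
def codeOf {X : Type*} {n : ℕ} (U : Fin n → Set X) : Set (Finset (Fin n)) :=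
  {σ | ∃ p, ∀ i, p ∈ U i ↔ i ∈ σ}

/-- `S` is a `k`-dimensional sphere: a sphere of positive radius inside a
`(k+1)`-dimensional affine subspace, centered in that subspace. -/
def IsSubSphere {E : Type*} [NormedAddCommGroup E] [NormedSpace ℝ E] (k : ℕ)
    (S : Set E) : Prop :=
  ∃ (A : AffineSubspace ℝ E) (c : E) (ρ : ℝ), 0 < ρ ∧ c ∈ A ∧
    Module.finrank ℝ A.direction = k + 1 ∧ S = (A : Set E) ∩ Metric.sphere c ρ

/-- The boundary spheres of the balls `B(xᵢ, rᵢ)` form a well-formed collection in `ℝ^d`. -/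
def WellFormedBalls {d n : ℕ} (x : Fin n → EuclideanSpace ℝ (Fin d))
    (r : Fin n → ℝ) : Prop :=
  ∀ F : Finset (Fin n), F.Nonempty →
    (F.card ≤ d →
      (⋂ i ∈ F, Metric.sphere (x i) (r i)) = ∅ ∨
        IsSubSphere (d - F.card) (⋂ i ∈ F, Metric.sphere (x i) (r i))) ∧
    (F.card = d + 1 → (⋂ i ∈ F, Metric.sphere (x i) (r i)) = ∅)

/-- `C` has a well-formed realization by open balls in `ℝ^d`. -/
def HasWFRealization {n : ℕ} (C : Set (Finset (Fin n))) (d : ℕ) : Prop :=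
  ∃ (x : Fin n → EuclideanSpace ℝ (Fin d)) (r : Fin n → ℝ),
    (∀ i, 0 < r i) ∧ WellFormedBalls x r ∧
    codeOf (fun i => Metric.ball (x i) (r i)) = C


-- my defs
def pmPoly {n : ℕ} (σ τ : Finset (Fin n)) : PM n :=
  (∏ i ∈ σ, X i) * ∏ j ∈ τ, (1 - X j)

lemma evalAt_pmPoly {n : ℕ} (c σ τ : Finset (Fin n)) :
    evalAt c (pmPoly σ τ) = if σ ⊆ c ∧ ∀ j ∈ τ, j ∉ c then 1 else 0 := by
  unfold evalAt pmPoly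
  rw [map_mul, map_prod, map_prod]
  by_cases h1 : σ ⊆ c
  · by_cases h2 : ∀ j ∈ τ, j ∉ c
    · rw [if_pos ⟨h1, h2⟩]
      rw [Finset.prod_eq_one (fun i hi => by simp [h1 hi]),
        Finset.prod_eq_one (fun j hj => by simp [h2 j hj])]
      simp
    · rw [if_neg (by tauto)]
      push_neg at h2
      obtain ⟨j, hj, hjc⟩ := h2
      apply mul_eq_zero_of_right
      apply Finset.prod_eq_zero hj
      simp [hjc]
  · rw [if_neg (by tauto)]
    obtain ⟨i, hi, hic⟩ := Finset.not_subset.mp h1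
    apply mul_eq_zero_of_left
    apply Finset.prod_eq_zero hi
    simp [hic]


lemma rho_eq_pmPoly {n : ℕ} (σ : Finset (Fin n)) : rho σ = pmPoly σ σᶜ := rfl

lemma evalAt_rho {n : ℕ} {c σ : Finset (Fin n)} (h : c ≠ σ) : evalAt c (rho σ) = 0 := by
  rw [rho_eq_pmPoly, evalAt_pmPoly, if_neg]
  rintro ⟨h1, h2⟩
  apply h
  apply Finset.Subset.antisymm _ h1
  intro x hx
  by_contra hxσ
  exact h2 x (Finset.mem_compl.mpr hxσ) hx

lemma evalAt_eq_zero_of_mem {n : ℕ} {C : Set (Finset (Fin n))} {f : PM n}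
    (hf : f ∈ neuralIdeal C) {c : Finset (Fin n)} (hc : c ∈ C) : evalAt c f = 0 := by
  have hle : neuralIdeal C ≤ RingHom.ker (MvPolynomial.eval
      (fun i => if i ∈ c then (1 : ZMod 2) else 0)) := by
    rw [neuralIdeal, Ideal.span_le]
    rintro g ⟨σ, hσ, rfl⟩
    have : c ≠ σ := fun h => hσ (h ▸ hc)
    exact (RingHom.mem_ker).mpr (evalAt_rho this)
  exact hle hf

lemma pmPoly_mem_ideal {n : ℕ} {C : Set (Finset (Fin n))} {σ τ : Finset (Fin n)}
    (hd : Disjoint σ τ) (hmiss : ∀ γ ∈ C, ¬(σ ⊆ γ ∧ ∀ j ∈ τ, j ∉ γ)) :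
    pmPoly σ τ ∈ neuralIdeal C := by
  classical
  set U : Finset (Fin n) := (σ ∪ τ)ᶜ with hU
  have key : pmPoly σ τ = ∑ t ∈ U.powerset, rho (σ ∪ t) := by
    have h1 : pmPoly σ τ = pmPoly σ τ * ∏ j ∈ U, ((X j : PM n) + (1 - X j)) := by
      rw [Finset.prod_eq_one (fun j _ => by ring), mul_one]
    rw [h1, Finset.prod_add, Finset.mul_sum]
    refine Finset.sum_congr rfl (fun t ht => ?_)
    rw [Finset.mem_powerset] at ht
    have htσ : Disjoint σ t := by
      rw [Finset.disjoint_left]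
      intro x hx hxt
      have := ht hxt
      rw [hU, Finset.mem_compl, Finset.mem_union] at this
      exact this (Or.inl hx)
    have hcompl : (σ ∪ t)ᶜ = τ ∪ (U \ t) := by
      ext x
      have h3 : x ∈ σ → x ∉ τ := fun hx => Finset.disjoint_left.mp hd hx
      have h4 : x ∈ t → x ∉ σ ∧ x ∉ τ := by
        intro hx
        have := ht hx
        rw [hU, Finset.mem_compl, Finset.mem_union] at this
        tauto
      simp only [Finset.mem_compl, Finset.mem_union, Finset.mem_sdiff, hU]
      tauto
    have hτU : Disjoint τ (U \ t) := by
      rw [Finset.disjoint_left]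
      intro x hx hx2
      rw [Finset.mem_sdiff, hU, Finset.mem_compl, Finset.mem_union] at hx2
      exact hx2.1 (Or.inr hx)
    rw [rho, hcompl, Finset.prod_union htσ, Finset.prod_union hτU, pmPoly]
    ring
  rw [key]
  apply Ideal.sum_mem
  intro t ht
  rw [Finset.mem_powerset] at ht
  apply Ideal.subset_span
  refine ⟨σ ∪ t, ?_, rfl⟩
  intro hmem
  refine hmiss _ hmem ⟨Finset.subset_union_left, fun j hj => ?_⟩
  rw [Finset.mem_union]
  rintro (h | h)
  · exact Finset.disjoint_left.mp hd h hj
  · have := ht h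
    rw [Finset.mem_compl, Finset.mem_union] at this
    exact this (Or.inr hj)


lemma pmPoly_ne_zero {n : ℕ} {σ τ : Finset (Fin n)} (hd : Disjoint σ τ) :
    pmPoly σ τ ≠ 0 := by
  intro h
  have h1 : evalAt σ (pmPoly σ τ) = 1 := by
    rw [evalAt_pmPoly, if_pos ⟨Finset.Subset.refl _, fun j hj => Finset.disjoint_right.mp hd hj⟩]
  rw [h] at h1
  simp [evalAt] at h1

lemma X_dvd_pmPoly {n : ℕ} {σ τ : Finset (Fin n)} (hd : Disjoint σ τ) {a : Fin n}
    (h : (X a : PM n) ∣ pmPoly σ τ) : a ∈ σ := by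
  classical
  by_contra haσ
  set φ := aeval (R := ZMod 2) (Function.update (X : Fin n → PM n) a 0) with hφ
  have h0 : φ (pmPoly σ τ) = 0 := by
    obtain ⟨q, hq⟩ := h
    rw [hq, map_mul, hφ, aeval_X, Function.update_self, zero_mul]
  have h1 : φ (pmPoly σ τ) = pmPoly σ (τ.erase a) := by
    rw [pmPoly, map_mul, map_prod, map_prod]
    congr 1
    · exact Finset.prod_congr rfl fun i hi => by
        rw [hφ, aeval_X, Function.update_of_ne (fun e => haσ (by rw [← e]; exact hi)) _ _]
    · by_cases haτ : a ∈ τ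
      · rw [← Finset.mul_prod_erase τ _ haτ]
        have : φ (1 - X a) = 1 := by
          rw [map_sub, map_one, hφ, aeval_X, Function.update_self, sub_zero]
        rw [this, one_mul]
        exact Finset.prod_congr rfl fun j hj => by
          rw [map_sub, map_one, hφ, aeval_X,
            Function.update_of_ne (Finset.ne_of_mem_erase hj) _ _]
      · rw [Finset.erase_eq_of_notMem haτ]
        exact Finset.prod_congr rfl fun j hj => by
          rw [map_sub, map_one, hφ, aeval_X,
            Function.update_of_ne (fun e => haτ (by rw [← e]; exact hj)) _ _]
  rw [h1] at h0
  exact pmPoly_ne_zero (hd.mono_right (Finset.erase_subset _ _)) h0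

lemma one_sub_X_dvd_pmPoly {n : ℕ} {σ τ : Finset (Fin n)} (hd : Disjoint σ τ) {a : Fin n}
    (h : ((1 - X a : PM n)) ∣ pmPoly σ τ) : a ∈ τ := by
  classical
  by_contra haτ
  set φ := aeval (R := ZMod 2) (Function.update (X : Fin n → PM n) a 1) with hφ
  have h0 : φ (pmPoly σ τ) = 0 := by
    obtain ⟨q, hq⟩ := h
    rw [hq, map_mul, map_sub, map_one, hφ, aeval_X, Function.update_self, sub_self, zero_mul]
  have h1 : φ (pmPoly σ τ) = pmPoly (σ.erase a) τ := by
    rw [pmPoly, map_mul, map_prod, map_prod]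
    congr 1
    · by_cases haσ : a ∈ σ
      · rw [← Finset.mul_prod_erase σ _ haσ]
        have : φ (X a) = 1 := by rw [hφ, aeval_X, Function.update_self]
        rw [this, one_mul]
        exact Finset.prod_congr rfl fun i hi => by
          rw [hφ, aeval_X, Function.update_of_ne (Finset.ne_of_mem_erase hi) _ _]
      · rw [Finset.erase_eq_of_notMem haσ]
        exact Finset.prod_congr rfl fun i hi => by
          rw [hφ, aeval_X, Function.update_of_ne (fun e => haσ (by rw [← e]; exact hi)) _ _]
    · exact Finset.prod_congr rfl fun j hj => by
        rw [map_sub, map_one, hφ, aeval_X,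
          Function.update_of_ne (fun e => haτ (by rw [← e]; exact hj)) _ _]
  rw [h1] at h0
  exact pmPoly_ne_zero (hd.mono_left (Finset.erase_subset _ _)) h0


lemma dvd_pmPoly_structure {n : ℕ} {σ τ σg τg : Finset (Fin n)} (hd : Disjoint σ τ)
    (h : pmPoly σg τg ∣ pmPoly σ τ) : σg ⊆ σ ∧ τg ⊆ τ := by
  constructor
  · intro a ha
    apply X_dvd_pmPoly hd
    exact dvd_trans (dvd_mul_of_dvd_left (Finset.dvd_prod_of_mem _ ha) _) h
  · intro a ha
    apply one_sub_X_dvd_pmPoly hd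
    exact dvd_trans (dvd_mul_of_dvd_right (Finset.dvd_prod_of_mem _ ha) _) h

lemma mem_CF_of_missing {n : ℕ} {C : Set (Finset (Fin n))} (hemp : ∅ ∈ C)
    (hcov : ∀ a : Fin n, ∃ c ∈ C, a ∈ c) {σ τ : Finset (Fin n)} (hd : Disjoint σ τ)
    (hcard : σ.card + τ.card = 2)
    (hmiss : ∀ γ ∈ C, ¬(σ ⊆ γ ∧ ∀ j ∈ τ, j ∉ γ)) : pmPoly σ τ ∈ CF C := by
  refine ⟨⟨σ, τ, hd, rfl⟩, pmPoly_mem_ideal hd hmiss, ?_⟩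
  rintro g ⟨σg, τg, hdg, rfl⟩ hgI hgdvd
  obtain ⟨hσg, hτg⟩ := dvd_pmPoly_structure hd hgdvd
  by_cases heq : σg = σ ∧ τg = τ
  · rw [heq.1, heq.2]; rfl
  -- otherwise card sum ≤ 1
  have hlt : σg.card + τg.card ≤ 1 := by
    have h1 : σg.card ≤ σ.card := Finset.card_le_card hσg
    have h2 : τg.card ≤ τ.card := Finset.card_le_card hτg
    rcases Nat.lt_or_ge (σg.card + τg.card) 2 with h | h
    · omega
    · exfalso
      apply heq
      have e1 : σg.card = σ.card := by omega
      have e2 : τg.card = τ.card := by omega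
      exact ⟨Finset.eq_of_subset_of_card_le hσg e1.ge,
        Finset.eq_of_subset_of_card_le hτg e2.ge⟩
  exfalso
  have hvanish : ∀ c ∈ C, evalAt c (pmPoly σg τg) = 0 :=
    fun c hc => evalAt_eq_zero_of_mem hgI hc
  rcases Nat.eq_zero_or_pos σg.card with hσ0 | hσ1
  · rw [Finset.card_eq_zero] at hσ0
    subst hσ0
    rcases Nat.eq_zero_or_pos τg.card with hτ0 | hτ1
    · rw [Finset.card_eq_zero] at hτ0
      subst hτ0
      have := hvanish ∅ hemp
      rw [evalAt_pmPoly, if_pos ⟨Finset.Subset.refl _, by simp⟩] at this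
      exact one_ne_zero this
    · have hτc : τg.card = 1 := by omega
      obtain ⟨a, rfl⟩ := Finset.card_eq_one.mp hτc
      have := hvanish ∅ hemp
      rw [evalAt_pmPoly, if_pos ⟨Finset.Subset.refl _, by simp⟩] at this
      exact one_ne_zero this
  · have hσc : σg.card = 1 := by omega
    have hτ0 : τg.card = 0 := by omega
    obtain ⟨a, rfl⟩ := Finset.card_eq_one.mp hσc
    rw [Finset.card_eq_zero] at hτ0
    subst hτ0
    obtain ⟨c, hcC, hac⟩ := hcov a
    have := hvanish c hcC
    rw [evalAt_pmPoly, if_pos ⟨Finset.singleton_subset_iff.mpr hac, by simp⟩] at this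
    exact one_ne_zero this


lemma eval_update_eq_of_not_mem_vars {n : ℕ} {f : PM n} {a : Fin n} (h : a ∉ f.vars)
    (g : Fin n → ZMod 2) (y z : ZMod 2) :
    eval (Function.update g a y) f = eval (Function.update g a z) f := by
  rw [eval_eq, eval_eq]
  refine Finset.sum_congr rfl fun d hd => ?_
  congr 1
  refine Finset.prod_congr rfl fun i hi => ?_
  have hia : i ≠ a := fun e => h ((mem_vars _).mpr ⟨d, hd, by rw [← e]; exact hi⟩)
  rw [Function.update_of_ne hia, Function.update_of_ne hia]

lemma vars_pmPoly {n : ℕ} {σ τ : Finset (Fin n)} (hd : Disjoint σ τ) :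
    (pmPoly σ τ).vars = σ ∪ τ := by
  classical
  apply Finset.Subset.antisymm
  · refine (vars_mul _ _).trans (Finset.union_subset_union ?_ ?_)
    · refine (vars_prod _).trans ?_
      intro v hv
      rw [Finset.mem_biUnion] at hv
      obtain ⟨i, hi, hvi⟩ := hv
      rw [vars_X] at hvi
      rw [Finset.mem_singleton] at hvi
      exact hvi ▸ hi
    · refine (vars_prod _).trans ?_
      intro v hv
      rw [Finset.mem_biUnion] at hv
      obtain ⟨j, hj, hvj⟩ := hv
      have hsub : ((1 - X j : PM n)).vars ⊆ {j} := by
        have hchar : (1 - X j : PM n) = 1 + X j := by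
          have h2 : ((1 : ZMod 2) + 1) = 0 := by decide
          have hz : (1 - X j : PM n) - (1 + X j) = -(C ((1 : ZMod 2) + 1) * X j) := by
            rw [map_add, map_one]; ring
          rw [h2, map_zero, zero_mul, neg_zero, sub_eq_zero] at hz
          exact hz
        rw [hchar]
        refine (vars_add_subset _ _).trans ?_
        rw [vars_one, vars_X]
        simp
      have := hsub hvj
      rw [Finset.mem_singleton] at this
      exact this ▸ hj
  · intro v hv
    by_contra hnv
    rw [Finset.mem_union] at hv
    set g : Fin n → ZMod 2 := fun i => if i ∈ σ then 1 else 0 with hg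
    have hkey := eval_update_eq_of_not_mem_vars hnv g 1 0
    have heval : ∀ (w : Fin n → ZMod 2), (∀ i ∈ σ, w i = 1) → (∀ j ∈ τ, w j = 0) →
        eval w (pmPoly σ τ) = 1 := by
      intro w h1 h2
      rw [pmPoly, map_mul, map_prod, map_prod,
        Finset.prod_eq_one (fun i hi => by rw [eval_X]; exact h1 i hi),
        Finset.prod_eq_one (fun j hj => by rw [map_sub, map_one, eval_X, h2 j hj, sub_zero]),
        one_mul]
    rcases hv with hvσ | hvτ
    · -- update g v 1 = g; update g v 0 kills the factor X v
      have e1 : eval (Function.update g v 1) (pmPoly σ τ) = 1 := by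
        apply heval
        · intro i hi
          rcases eq_or_ne i v with rfl | hne
          · rw [Function.update_self]
          · rw [Function.update_of_ne hne, hg]; simp [hi]
        · intro j hj
          have hne : j ≠ v := fun e => Finset.disjoint_left.mp hd hvσ (by rw [← e]; exact hj)
          rw [Function.update_of_ne hne, hg]
          simp [Finset.disjoint_right.mp hd hj]
      have e0 : eval (Function.update g v 0) (pmPoly σ τ) = 0 := by
        rw [pmPoly, map_mul, map_prod]
        apply mul_eq_zero_of_left
        apply Finset.prod_eq_zero hvσ
        rw [eval_X, Function.update_self]
      rw [e1, e0] at hkey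
      exact one_ne_zero hkey
    · have e0 : eval (Function.update g v 0) (pmPoly σ τ) = 1 := by
        apply heval
        · intro i hi
          have hne : i ≠ v := fun e => Finset.disjoint_right.mp hd hvτ (by rw [← e]; exact hi)
          rw [Function.update_of_ne hne, hg]; simp [hi]
        · intro j hj
          rcases eq_or_ne j v with rfl | hne
          · rw [Function.update_self]
          · rw [Function.update_of_ne hne, hg]
            simp [Finset.disjoint_right.mp hd hj]
      have e1 : eval (Function.update g v 1) (pmPoly σ τ) = 0 := by
        rw [pmPoly, map_mul, map_prod (eval _) _ τ]
        apply mul_eq_zero_of_right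
        apply Finset.prod_eq_zero hvτ
        rw [map_sub, map_one, eval_X, Function.update_self, sub_self]
      rw [e1, e0] at hkey
      exact zero_ne_one hkey


lemma fullOn_of_pairwise {n : ℕ} {m : ℕ} {C : Set (Finset (Fin n))}
    (h : InductivelyPierced m C) :
    ∀ S : Finset (Fin n),
      (∃ γ ∈ C, γ ∩ S = ∅) →
      (∀ a ∈ S, ∃ γ ∈ C, a ∈ γ) →
      (∀ a ∈ S, ∀ b ∈ S, a ≠ b →
        (∃ γ ∈ C, a ∈ γ ∧ b ∈ γ) ∧ (∃ γ ∈ C, a ∈ γ ∧ b ∉ γ) ∧ (∃ γ ∈ C, b ∈ γ ∧ a ∉ γ)) →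
      ∀ A ⊆ S, ∃ γ ∈ C, γ ∩ S = A := by
  induction h with
  | empty =>
    intro S hemp hsing hpair A hA
    by_cases hA0 : A = ∅
    · exact ⟨∅, rfl, by simp [hA0]⟩
    · obtain ⟨a, ha⟩ := Finset.nonempty_iff_ne_empty.mpr hA0
      obtain ⟨γ, hγ, haγ⟩ := hsing a (hA ha)
      rw [Set.mem_singleton_iff] at hγ
      subst hγ
      simp at haγ
  | pierce C i k' hk hp hrec IH =>
    obtain ⟨σ₀, τ₀, hστ, hiτ, -, -, hCeq⟩ := hp
    have hiσ : i ∉ σ₀ := fun h => hiτ (hστ h)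
    have hD : del C i ⊆ C := by
      have h1 : del C i ⊆ del C i ∪ Icc' (insert i σ₀) (insert i τ₀) := Set.subset_union_left
      rwa [← hCeq] at h1
    have hDi : ∀ γ ∈ del C i, i ∉ γ := by
      rintro γ ⟨c, -, rfl⟩
      exact Finset.notMem_erase _ _
    have hmemD : ∀ γ ∈ C, γ.erase i ∈ del C i := fun γ hγ => ⟨γ, hγ, rfl⟩
    have hInt : ∀ γ ∈ C, i ∈ γ → insert i σ₀ ⊆ γ ∧ γ ⊆ insert i τ₀ := by
      intro γ hγ hiγ
      rw [hCeq] at hγ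
      rcases hγ with hγ | hγ
      · exact absurd hiγ (hDi _ hγ)
      · exact hγ
    intro S hemp hsing hpair A hA
    by_cases hiS : i ∈ S
    · set S' := S.erase i with hS'
      have fact1 : ∀ j ∈ S', j ∉ σ₀ := by
        intro j hj hjσ
        have hji : j ≠ i := Finset.ne_of_mem_erase hj
        obtain ⟨-, ⟨γ, hγC, hiγ, hjγ⟩, -⟩ :=
          hpair i hiS j (Finset.mem_of_mem_erase hj) (Ne.symm hji)
        exact hjγ ((hInt γ hγC hiγ).1 (Finset.mem_insert_of_mem hjσ))
      have fact2 : ∀ j ∈ S', j ∈ τ₀ := by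
        intro j hj
        have hji : j ≠ i := Finset.ne_of_mem_erase hj
        obtain ⟨⟨γ, hγC, hiγ, hjγ⟩, -, -⟩ :=
          hpair i hiS j (Finset.mem_of_mem_erase hj) (Ne.symm hji)
        have := (hInt γ hγC hiγ).2 hjγ
        rw [Finset.mem_insert] at this
        exact this.resolve_left hji
      by_cases hiA : i ∈ A
      · refine ⟨σ₀ ∪ A, ?_, ?_⟩
        · have hmem : σ₀ ∪ A ∈ Icc' (insert i σ₀) (insert i τ₀) := by
            constructor
            · intro x hx
              rw [Finset.mem_insert] at hx
              rcases hx with rfl | hx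
              · exact Finset.mem_union_right _ hiA
              · exact Finset.mem_union_left _ hx
            · intro x hx
              rw [Finset.mem_union] at hx
              rw [Finset.mem_insert]
              rcases hx with hx | hx
              · exact Or.inr (hστ hx)
              · rcases eq_or_ne x i with rfl | hxi
                · exact Or.inl rfl
                · exact Or.inr (fact2 x (Finset.mem_erase.mpr ⟨hxi, hA hx⟩))
          have : σ₀ ∪ A ∈ del C i ∪ Icc' (insert i σ₀) (insert i τ₀) := Or.inr hmem
          rwa [← hCeq] at this
        · ext x
          rw [Finset.mem_inter, Finset.mem_union]
          constructor
          · rintro ⟨hx1 | hx1, hx2⟩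
            · exfalso
              have hxi : x ≠ i := fun e => hiσ (by rw [← e]; exact hx1)
              exact fact1 x (Finset.mem_erase.mpr ⟨hxi, hx2⟩) hx1
            · exact hx1
          · intro hx
            exact ⟨Or.inr hx, hA hx⟩
      · have hAS' : A ⊆ S' := Finset.subset_erase.mpr ⟨hA, hiA⟩
        have hyp1 : ∃ γ ∈ del C i, γ ∩ S' = ∅ := by
          obtain ⟨γ, hγC, hγS⟩ := hemp
          refine ⟨γ.erase i, hmemD γ hγC, ?_⟩
          rw [Finset.eq_empty_iff_forall_notMem]
          intro x hx
          rw [Finset.mem_inter, Finset.mem_erase] at hx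
          have : x ∈ γ ∩ S := Finset.mem_inter.mpr ⟨hx.1.2, Finset.mem_of_mem_erase hx.2⟩
          rw [hγS] at this
          simp at this
        have hyp2 : ∀ a ∈ S', ∃ γ ∈ del C i, a ∈ γ := by
          intro a ha
          obtain ⟨γ, hγC, haγ⟩ := hsing a (Finset.mem_of_mem_erase ha)
          exact ⟨γ.erase i, hmemD γ hγC,
            Finset.mem_erase.mpr ⟨Finset.ne_of_mem_erase ha, haγ⟩⟩
        have hyp3 : ∀ a ∈ S', ∀ b ∈ S', a ≠ b →
            (∃ γ ∈ del C i, a ∈ γ ∧ b ∈ γ) ∧ (∃ γ ∈ del C i, a ∈ γ ∧ b ∉ γ) ∧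
              (∃ γ ∈ del C i, b ∈ γ ∧ a ∉ γ) := by
          intro a ha b hb hab
          have hai := Finset.ne_of_mem_erase ha
          have hbi := Finset.ne_of_mem_erase hb
          obtain ⟨⟨γ1, h1C, h1⟩, ⟨γ2, h2C, h2⟩, ⟨γ3, h3C, h3⟩⟩ :=
            hpair a (Finset.mem_of_mem_erase ha) b (Finset.mem_of_mem_erase hb) hab
          exact ⟨⟨γ1.erase i, hmemD _ h1C, Finset.mem_erase.mpr ⟨hai, h1.1⟩,
              Finset.mem_erase.mpr ⟨hbi, h1.2⟩⟩,
            ⟨γ2.erase i, hmemD _ h2C, Finset.mem_erase.mpr ⟨hai, h2.1⟩,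
              fun h => h2.2 (Finset.mem_of_mem_erase h)⟩,
            ⟨γ3.erase i, hmemD _ h3C, Finset.mem_erase.mpr ⟨hbi, h3.1⟩,
              fun h => h3.2 (Finset.mem_of_mem_erase h)⟩⟩
        obtain ⟨γ, hγD, hγ⟩ := IH S' hyp1 hyp2 hyp3 A hAS'
        refine ⟨γ, hD hγD, ?_⟩
        have hiγ : i ∉ γ := hDi γ hγD
        rw [← hγ]
        ext x
        rw [Finset.mem_inter, Finset.mem_inter, Finset.mem_erase]
        constructor
        · rintro ⟨hx1, hx2⟩
          exact ⟨hx1, fun e => hiγ (by rw [← e]; exact hx1), hx2⟩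
        · rintro ⟨hx1, -, hx2⟩
          exact ⟨hx1, hx2⟩
    · -- i ∉ S
      have hyp1 : ∃ γ ∈ del C i, γ ∩ S = ∅ := by
        obtain ⟨γ, hγC, hγS⟩ := hemp
        refine ⟨γ.erase i, hmemD γ hγC, ?_⟩
        rw [Finset.eq_empty_iff_forall_notMem]
        intro x hx
        rw [Finset.mem_inter, Finset.mem_erase] at hx
        have : x ∈ γ ∩ S := Finset.mem_inter.mpr ⟨hx.1.2, hx.2⟩
        rw [hγS] at this
        simp at this
      have hyp2 : ∀ a ∈ S, ∃ γ ∈ del C i, a ∈ γ := by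
        intro a ha
        obtain ⟨γ, hγC, haγ⟩ := hsing a ha
        have hai : a ≠ i := fun e => hiS (by rw [← e]; exact ha)
        exact ⟨γ.erase i, hmemD γ hγC, Finset.mem_erase.mpr ⟨hai, haγ⟩⟩
      have hyp3 : ∀ a ∈ S, ∀ b ∈ S, a ≠ b →
          (∃ γ ∈ del C i, a ∈ γ ∧ b ∈ γ) ∧ (∃ γ ∈ del C i, a ∈ γ ∧ b ∉ γ) ∧
            (∃ γ ∈ del C i, b ∈ γ ∧ a ∉ γ) := by
        intro a ha b hb hab
        have hai : a ≠ i := fun e => hiS (by rw [← e]; exact ha)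
        have hbi : b ≠ i := fun e => hiS (by rw [← e]; exact hb)
        obtain ⟨⟨γ1, h1C, h1⟩, ⟨γ2, h2C, h2⟩, ⟨γ3, h3C, h3⟩⟩ := hpair a ha b hb hab
        exact ⟨⟨γ1.erase i, hmemD _ h1C, Finset.mem_erase.mpr ⟨hai, h1.1⟩,
            Finset.mem_erase.mpr ⟨hbi, h1.2⟩⟩,
          ⟨γ2.erase i, hmemD _ h2C, Finset.mem_erase.mpr ⟨hai, h2.1⟩,
            fun h => h2.2 (Finset.mem_of_mem_erase h)⟩,
          ⟨γ3.erase i, hmemD _ h3C, Finset.mem_erase.mpr ⟨hbi, h3.1⟩,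
            fun h => h3.2 (Finset.mem_of_mem_erase h)⟩⟩
      obtain ⟨γ, hγD, hγ⟩ := IH S hyp1 hyp2 hyp3 A hA
      exact ⟨γ, hD hγD, hγ⟩


lemma pairwise_of_clique {n : ℕ} {C : Set (Finset (Fin n))} (hemp : ∅ ∈ C)
    (hcov : ∀ a : Fin n, ∃ c ∈ C, a ∈ c) {S : Finset (Fin n)}
    (hclq : (GRel C).IsClique (S : Set (Fin n))) :
    ∀ a ∈ S, ∀ b ∈ S, a ≠ b →
      (∃ γ ∈ C, a ∈ γ ∧ b ∈ γ) ∧ (∃ γ ∈ C, a ∈ γ ∧ b ∉ γ) ∧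
        (∃ γ ∈ C, b ∈ γ ∧ a ∉ γ) := by
  intro a ha b hb hab
  have hadj : (GRel C).Adj a b := hclq (Finset.mem_coe.mpr ha) (Finset.mem_coe.mpr hb) hab
  obtain ⟨-, hvars⟩ : a ≠ b ∧ ∀ f ∈ CF C, f.vars ≠ {a, b} := hadj
  refine ⟨?_, ?_, ?_⟩
  · by_contra hno
    push_neg at hno
    have hCF : pmPoly {a, b} ∅ ∈ CF C := by
      refine mem_CF_of_missing hemp hcov (Finset.disjoint_empty_right _) ?_ ?_
      · rw [Finset.card_pair hab, Finset.card_empty]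
      · rintro γ hγ ⟨hsub, -⟩
        exact hno γ hγ (hsub (by simp)) (hsub (by simp))
    have := hvars _ hCF
    rw [vars_pmPoly (Finset.disjoint_empty_right _), Finset.union_empty] at this
    exact this rfl
  · by_contra hno
    push_neg at hno
    have hd : Disjoint ({a} : Finset (Fin n)) {b} := by
      rw [Finset.disjoint_singleton]; exact hab
    have hCF : pmPoly {a} {b} ∈ CF C := by
      refine mem_CF_of_missing hemp hcov hd (by simp) ?_
      rintro γ hγ ⟨hsub, hnot⟩
      exact hnot b (by simp) (hno γ hγ (hsub (by simp)))
    have := hvars _ hCF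
    exact this (by rw [vars_pmPoly hd]; ext x; simp)
  · by_contra hno
    push_neg at hno
    have hd : Disjoint ({b} : Finset (Fin n)) {a} := by
      rw [Finset.disjoint_singleton]; exact hab.symm
    have hCF : pmPoly {b} {a} ∈ CF C := by
      refine mem_CF_of_missing hemp hcov hd (by simp) ?_
      rintro γ hγ ⟨hsub, hnot⟩
      exact hnot a (by simp) (hno γ hγ (hsub (by simp)))
    have := hvars _ hCF
    exact this (by rw [vars_pmPoly hd]; ext x; simp; tauto)


set_option maxHeartbeats 1000000 in
open scoped RealInnerProductSpace in
lemma no_indep_balls {k n : ℕ} (hk : 1 ≤ k) {C : Set (Finset (Fin n))} {S : Finset (Fin n)}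
    (hcard : S.card = k + 1) (Full : ∀ A ⊆ S, ∃ γ ∈ C, γ ∩ S = A)
    (x : Fin n → EuclideanSpace ℝ (Fin (k - 1))) (r : Fin n → ℝ) (hr : ∀ i, 0 < r i)
    (hcode : codeOf (fun i => Metric.ball (x i) (r i)) = C) : False := by
  classical
  set b : ↥S → ℝ := fun a => ‖x ↑a‖ ^ 2 - r ↑a ^ 2 with hb
  set L : (↥S → ℝ) →ₗ[ℝ] EuclideanSpace ℝ (Fin (k - 1)) × ℝ :=
    { toFun := fun c => (∑ a, c a • x ↑a, ∑ a, c a * b a)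
      map_add' := fun c d => by
        simp only [Pi.add_apply, add_smul, add_mul, Finset.sum_add_distrib, Prod.mk_add_mk]
      map_smul' := fun t c => by
        simp only [Pi.smul_apply, smul_eq_mul, RingHom.id_apply, Prod.smul_mk,
          Finset.smul_sum, smul_smul, mul_assoc, smul_eq_mul, Finset.mul_sum] } with hL
  have hrank1 : Module.finrank ℝ (↥S → ℝ) = k + 1 := by
    rw [Module.finrank_pi, Fintype.card_coe, hcard]
  have hrank2 : Module.finrank ℝ (EuclideanSpace ℝ (Fin (k - 1)) × ℝ) = k := by
    rw [Module.finrank_prod, finrank_euclideanSpace_fin, Module.finrank_self]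
    omega
  have hninj : ¬ Function.Injective L := by
    intro hinj
    have := LinearMap.finrank_le_finrank_of_injective hinj
    omega
  have hker : LinearMap.ker L ≠ ⊥ := fun h => hninj (LinearMap.ker_eq_bot.mp h)
  obtain ⟨c0, hc0ker, hc0⟩ := (Submodule.ne_bot_iff _).mp hker
  rw [LinearMap.mem_ker] at hc0ker
  have key : ∃ c : ↥S → ℝ, L c = 0 ∧ 0 ≤ ∑ a, c a ∧ ∃ a, 0 < c a := by
    have hposof : ∀ c : ↥S → ℝ, 0 < ∑ a, c a → ∃ a, 0 < c a := by
      intro c hc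
      by_contra hno
      push_neg at hno
      have : ∑ a, c a ≤ 0 := Finset.sum_nonpos fun a _ => hno a
      linarith
    have hnegsum : ∀ c : ↥S → ℝ, ∑ a, (-c) a = -∑ a, c a := fun c => by simp
    rcases lt_trichotomy (∑ a, c0 a) 0 with h | h | h
    · refine ⟨-c0, by rw [map_neg, hc0ker, neg_zero], ?_, ?_⟩
      · rw [hnegsum]; linarith
      · apply hposof; rw [hnegsum]; linarith
    · obtain ⟨a, ha⟩ := Function.ne_iff.mp hc0
      rcases lt_or_gt_of_ne ha with ha' | ha'
      · refine ⟨-c0, by rw [map_neg, hc0ker, neg_zero], ?_, ⟨a, by simpa using ha'⟩⟩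
        rw [hnegsum, h, neg_zero]
      · exact ⟨c0, hc0ker, h.ge, ⟨a, ha'⟩⟩
    · exact ⟨c0, hc0ker, h.le, hposof c0 h⟩
  obtain ⟨c, hLc, hsum, a1, ha1⟩ := key
  have hx0 : ∑ a, c a • x ↑a = (0 : EuclideanSpace ℝ (Fin (k - 1))) := congrArg Prod.fst hLc
  have hb0 : ∑ a, c a * b a = 0 := congrArg Prod.snd hLc
  set A : Finset (Fin n) := (S.attach.filter fun a => 0 < c a).image Subtype.val with hA
  have hA_mem : ∀ a : ↥S, (↑a ∈ A ↔ 0 < c a) := by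
    intro a
    rw [hA, Finset.mem_image]
    constructor
    · rintro ⟨d, hd, hda⟩
      rw [Finset.mem_filter] at hd
      have : d = a := Subtype.ext hda
      rw [← this]; exact hd.2
    · intro h
      exact ⟨a, Finset.mem_filter.mpr ⟨Finset.mem_attach _ _, h⟩, rfl⟩
  have hAsub : A ⊆ S := by
    intro v hv
    rw [hA, Finset.mem_image] at hv
    obtain ⟨d, -, hdv⟩ := hv
    rw [← hdv]; exact d.2
  obtain ⟨γ, hγC, hγA⟩ := Full A hAsub
  rw [← hcode] at hγC
  obtain ⟨p, hp⟩ := hγC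
  have hterm_pos : ∀ a : ↥S, 0 < c a → c a * (‖p - x ↑a‖ ^ 2 - r ↑a ^ 2) < 0 := by
    intro a hca
    have haγ : ↑a ∈ γ := by
      have : (↑a : Fin n) ∈ γ ∩ S := by rw [hγA]; exact (hA_mem a).mpr hca
      exact Finset.mem_of_mem_inter_left this
    have hball := (hp ↑a).mpr haγ
    rw [Metric.mem_ball, dist_eq_norm] at hball
    have h1 : ‖p - x ↑a‖ ^ 2 - r ↑a ^ 2 < 0 := by
      nlinarith [norm_nonneg (p - x ↑a), hr (↑a : Fin n)]
    exact mul_neg_of_pos_of_neg hca h1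
  have hterm_nonpos : ∀ a : ↥S, c a ≤ 0 → c a * (‖p - x ↑a‖ ^ 2 - r ↑a ^ 2) ≤ 0 := by
    intro a hca
    have haγ : ↑a ∉ γ := by
      intro hmem
      have : (↑a : Fin n) ∈ γ ∩ S := Finset.mem_inter.mpr ⟨hmem, a.2⟩
      rw [hγA] at this
      exact absurd ((hA_mem a).mp this) (not_lt.mpr hca)
    have hball : p ∉ Metric.ball (x ↑a) (r ↑a) := fun h => haγ ((hp ↑a).mp h)
    rw [Metric.mem_ball, dist_eq_norm, not_lt] at hball
    have h1 : 0 ≤ ‖p - x ↑a‖ ^ 2 - r ↑a ^ 2 := by nlinarith [hr (↑a : Fin n)]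
    exact mul_nonpos_iff.mpr (Or.inr ⟨hca, h1⟩)
  have hneg : ∑ a : ↥S, c a * (‖p - x ↑a‖ ^ 2 - r ↑a ^ 2) < 0 := by
    have h0 : ∑ _a : ↥S, (0 : ℝ) = 0 := by simp
    rw [← h0]
    apply Finset.sum_lt_sum
    · intro a _
      by_cases hca : 0 < c a
      · exact le_of_lt (hterm_pos a hca)
      · exact hterm_nonpos a (not_lt.mp hca)
    · exact ⟨a1, Finset.mem_univ _, hterm_pos a1 ha1⟩
  have heq : ∑ a : ↥S, c a * (‖p - x ↑a‖ ^ 2 - r ↑a ^ 2) = (∑ a, c a) * ‖p‖ ^ 2 := by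
    have expand : ∀ a : ↥S, c a * (‖p - x ↑a‖ ^ 2 - r ↑a ^ 2) =
        c a * ‖p‖ ^ 2 - 2 * (c a * ⟪p, x ↑a⟫) + c a * b a := by
      intro a
      rw [norm_sub_sq_real, hb]
      ring
    rw [Finset.sum_congr rfl fun a _ => expand a, Finset.sum_add_distrib,
      Finset.sum_sub_distrib, ← Finset.sum_mul, ← Finset.mul_sum, hb0, add_zero]
    have hinner : ∑ a : ↥S, c a * ⟪p, x ↑a⟫ = ⟪p, ∑ a : ↥S, c a • x ↑a⟫ := by
      rw [inner_sum]
      exact Finset.sum_congr rfl fun a _ => (real_inner_smul_right _ _ _).symm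
    rw [hinner, hx0, inner_zero_right, mul_zero, sub_zero]
  have hfinal : 0 ≤ (∑ a, c a) * ‖p‖ ^ 2 :=
    mul_nonneg hsum (by positivity)
  rw [heq] at hneg
  linarith


/-- an inductively pierced code whose graph contains a clique of
size `k+1` has no well-formed realization by open balls in `ℝ^{k-1}`. -/
theorem no_realization_below {n : ℕ} (C : Set (Finset (Fin n)))
    (hgood : GoodCode C) (hip : ∃ m, InductivelyPierced m C) (k : ℕ)
    (S : Finset (Fin n)) (hcard : S.card = k + 1)
    (hclq : (GRel C).IsClique (S : Set (Fin n))) :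
    ¬ HasWFRealization C (k - 1) := by
  rintro ⟨x, r, hrpos, hwf, hcode⟩
  obtain ⟨hemp, hcov, -⟩ := hgood
  obtain ⟨m, hIP⟩ := hip
  have hSne : S.Nonempty := Finset.card_pos.mp (by omega)
  obtain ⟨a0, ha0⟩ := hSne
  rcases Nat.eq_zero_or_pos k with hk0 | hk
  · subst hk0
    obtain ⟨c0, hc0C, hac0⟩ := hcov a0
    rw [← hcode] at hemp hc0C
    obtain ⟨p, hp⟩ := hemp
    obtain ⟨q, hq⟩ := hc0C
    haveI : IsEmpty (Fin (0 - 1)) := inferInstanceAs (IsEmpty (Fin 0))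
    haveI : Unique (EuclideanSpace ℝ (Fin (0 - 1))) :=
      inferInstance
    have hpq : p = q := Subsingleton.elim p q
    have h1 : q ∈ Metric.ball (x a0) (r a0) := (hq a0).mpr hac0
    have h2 : p ∉ Metric.ball (x a0) (r a0) := fun h => by simpa using (hp a0).mp h
    rw [hpq] at h2
    exact h2 h1
  · have hpair := pairwise_of_clique hemp hcov hclq
    have Full : ∀ A ⊆ S, ∃ γ ∈ C, γ ∩ S = A :=
      fullOn_of_pairwise hIP S ⟨∅, hemp, by simp⟩ (fun a _ => hcov a) hpair
    exact no_indep_balls hk hcard Full x r hrpos hcode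

end
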